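/- arXiv:2305.14297 — 2 statements merged into one kernel-verified Lean document; each statement's English description precedes it below -/
import Mathlib

section
/- Consider an absolutely conservative production–destruction system on ℝ^N whose functions p_{mν}, d_{mν} are nonnegative, twice continuously differentiable and Lipschitz continuous, an explicit s-stage Runge–Kutta scheme with nonnegative a_{ij}, b_j and nodes c_i = Σ_j a_{ij}, and a state y^n ∈ ℝ^N with positive entries. Suppose that for every h in some interval (0,h₀] there are positive denominators ρ_{iν}(h) and stage vectors y^{(i)}(h) with positive entries satisfying the MPRK stage equations, and that y^{(i)}_ν(h)/ρ_{iν}(h) = 1 + O(h) as h → 0⁺ for all i = 2,…,s and ν = 1,…,N. Then y^{(i)}_ν(h) = y^n_ν + h c_i F_ν(y^n) + O(h²) as h → 0⁺, for all i and ν, where F_m(y) = Σ_ν (p_{mν}(y) − d_{mν}(y)). -/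
open Topology Asymptotics Filter Finset

/-! Induction on the stage index. If every earlier stage satisfies `y⁽ʲ⁾ = yⁿ + O(h)`, Lipschitz
continuity gives `p(y⁽ʲ⁾) = p(yⁿ) + O(h)` and `d(y⁽ʲ⁾) = d(yⁿ) + O(h)`; since the Patankar weights
`y⁽ⁱ⁾_μ / ρ_{iμ}` are `1 + O(h)`, every summand of the stage equation is the explicit Euler summand
`p(yⁿ) - d(yⁿ)` up to `O(h)`, so after the factor `h` the stage is `yⁿ + h cᵢ F(yⁿ) + O(h²)`. -/

theorem LipschitzWith.isBigO_comp_sub {α E F : Type*} [SeminormedAddCommGroup E]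
    [SeminormedAddCommGroup F] {K : NNReal} {f : E → F} (hf : LipschitzWith K f)
    {l : Filter α} {x : α → E} {x₀ : E} {g : α → ℝ} (hx : (fun t => x t - x₀) =O[l] g) :
    (fun t => f (x t) - f x₀) =O[l] g :=
  (IsBigO.of_bound K (Eventually.of_forall fun t => by
    simpa only [dist_eq_norm] using hf.dist_le_mul (x t) x₀)).trans hx

theorem Asymptotics.IsBigO.mul_sub_of_sub {α : Type*} {l : Filter α} {g u v : α → ℝ} {u₀ : ℝ}
    (hg : g =O[l] fun _ => (1 : ℝ)) (hu : (fun t => u t - u₀) =O[l] g)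
    (hv : (fun t => v t - 1) =O[l] g) :
    (fun t => u t * v t - u₀) =O[l] g := by
  have hu_bdd : u =O[l] fun _ => (1 : ℝ) :=
    ((hu.trans hg).add (isBigO_const_const u₀ one_ne_zero l)).congr_left fun t => by ring
  exact ((hu_bdd.mul hv).congr_right fun t => one_mul _).add hu |>.congr_left fun t => by ring

theorem mprk_stage_sub_isBigO_sq {N s : ℕ} {p d : Fin N → Fin N → (Fin N → ℝ) → ℝ}
    (hpL : ∀ m ν, ∃ K, LipschitzWith K (p m ν)) (hdL : ∀ m ν, ∃ K, LipschitzWith K (d m ν))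
    {a : Fin s → Fin s → ℝ} {yn : Fin N → ℝ} {ρ Y : ℝ → Fin s → Fin N → ℝ} {i : Fin s}
    {ν : Fin N}
    (hstage : ∀ᶠ h in 𝓝[>] 0, Y h i ν = yn ν +
      h * ∑ j ∈ univ.filter (· < i), a i j *
        ∑ μ, (p ν μ (Y h j) * Y h i μ / ρ h i μ - d ν μ (Y h j) * Y h i ν / ρ h i ν))
    (hratio : (i : ℕ) ≠ 0 → ∀ μ, (fun h => Y h i μ / ρ h i μ - 1) =O[𝓝[>] 0] fun h => h)
    (hprev : ∀ j < i, ∀ μ, (fun h => Y h j μ - yn μ) =O[𝓝[>] 0] fun h => h) :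
    (fun h => Y h i ν - (yn ν + h * (∑ j ∈ univ.filter (· < i), a i j) *
      ∑ μ, (p ν μ yn - d ν μ yn))) =O[𝓝[>] 0] fun h => h ^ 2 := by
  have hbdd : (fun h : ℝ => h) =O[𝓝[>] 0] fun _ => (1 : ℝ) :=
    (tendsto_id.mono_left nhdsWithin_le_nhds).isBigO_one ℝ
  set r : ℝ → Fin N → ℝ := fun h μ => Y h i μ / ρ h i μ
  have hcomp : ∀ j < i, ∀ (f : (Fin N → ℝ) → ℝ), (∃ K, LipschitzWith K f) →
      (fun h => f (Y h j) - f yn) =O[𝓝[>] 0] fun h => h := fun j hj f ⟨K, hf⟩ =>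
    hf.isBigO_comp_sub (isBigO_pi.2 (hprev j hj))
  have hterm : ∀ j ∈ univ.filter (· < i), ∀ μ,
      (fun h => (p ν μ (Y h j) * r h μ - p ν μ yn) - (d ν μ (Y h j) * r h ν - d ν μ yn))
        =O[𝓝[>] 0] fun h => h := by
    intro j hj μ
    have hji : j < i := (mem_filter.1 hj).2
    have hi : (i : ℕ) ≠ 0 := Nat.ne_zero_of_lt hji
    exact (hbdd.mul_sub_of_sub (hcomp j hji _ (hpL ν μ)) (hratio hi μ)).sub
      (hbdd.mul_sub_of_sub (hcomp j hji _ (hdL ν μ)) (hratio hi ν))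
  have hsum := (isBigO_refl (fun h : ℝ => h) _).mul <| IsBigO.fun_sum fun j hj =>
    (IsBigO.fun_sum fun μ (_ : μ ∈ univ) => hterm j hj μ).const_mul_left (a i j)
  refine hsum.congr' (hstage.mono fun h hh => ?_) (Eventually.of_forall fun h => (sq h).symm)
  dsimp only
  rw [hh]
  simp only [r, mul_sub, sum_sub_distrib, mul_div_assoc, ← sum_mul]
  ring

theorem stmt10_general (N s : ℕ)
    (p d : Fin N → Fin N → (Fin N → ℝ) → ℝ)
    (hpL : ∀ m ν, ∃ K, LipschitzWith K (p m ν))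
    (hdL : ∀ m ν, ∃ K, LipschitzWith K (d m ν))
    (a : Fin s → Fin s → ℝ) (c : Fin s → ℝ)
    (hexp : ∀ i j : Fin s, i ≤ j → a i j = 0)
    (hc : ∀ i, c i = ∑ j, a i j)
    (yn : Fin N → ℝ)
    (F : (Fin N → ℝ) → (Fin N → ℝ))
    (hF : ∀ y m, F y m = ∑ ν, (p m ν y - d m ν y))
    (ρ : ℝ → Fin s → Fin N → ℝ) (Y : ℝ → Fin s → Fin N → ℝ)
    (hstage : ∃ h₀ > (0 : ℝ), ∀ h ∈ Set.Ioc (0 : ℝ) h₀,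
      (∀ (i : Fin s) ν, (i : ℕ) ≠ 0 → 0 < ρ h i ν) ∧
      (∀ i m, 0 < Y h i m) ∧
      (∀ i m, Y h i m = yn m +
        h * ∑ j ∈ Finset.univ.filter (fun j => j < i), a i j *
          ∑ ν, (p m ν (Y h j) * Y h i ν / ρ h i ν - d m ν (Y h j) * Y h i m / ρ h i m)))
    (hratio : ∀ i : Fin s, (i : ℕ) ≠ 0 → ∀ ν,
      (fun h => Y h i ν / ρ h i ν - 1) =O[𝓝[>] (0 : ℝ)] fun h => h) :
    ∀ i ν, (fun h => Y h i ν - (yn ν + h * c i * F yn ν))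
      =O[𝓝[>] (0 : ℝ)] fun h => h ^ 2 := by
  obtain ⟨h₀, hh₀, hS⟩ := hstage
  have hstage_ev : ∀ i ν, ∀ᶠ h in 𝓝[>] 0, Y h i ν = yn ν +
      h * ∑ j ∈ univ.filter (· < i), a i j *
        ∑ μ, (p ν μ (Y h j) * Y h i μ / ρ h i μ - d ν μ (Y h j) * Y h i ν / ρ h i ν) :=
    fun i ν => eventually_of_mem (Ioc_mem_nhdsGT hh₀) fun h hh => (hS h hh).2.2 i ν
  have hc_lt : ∀ i, c i = ∑ j ∈ univ.filter (· < i), a i j := fun i => by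
    rw [hc, sum_filter_of_ne fun j _ hj => lt_of_not_ge fun hij => hj (hexp i j hij)]
  have hsq : (fun h : ℝ => h ^ 2) =O[𝓝[>] 0] fun h => h :=
    (isLittleO_pow_id one_lt_two).isBigO.mono nhdsWithin_le_nhds
  intro i ν
  induction i using WellFoundedLT.induction generalizing ν with
  | _ i ih =>
    have hprev : ∀ j < i, ∀ μ, (fun h => Y h j μ - yn μ) =O[𝓝[>] 0] fun h => h :=
      fun j hj μ => ((ih j hj μ).trans hsq).add
        ((isBigO_refl _ _).const_mul_left (c j * F yn μ)) |>.congr_left fun h => by ring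
    simpa only [hc_lt, hF, mul_assoc] using
      mprk_stage_sub_isBigO_sq hpL hdL (hstage_ev i ν) (hratio i) hprev

/-- Lemma 5.4 (Izgin–Ketcheson–Meister): Taylor expansion of the MPRK stages
to first order, assuming the Patankar weights satisfy
y⁽ⁱ⁾_ν/ρ_{iν} = 1 + O(h). -/
theorem stmt10 (N s : ℕ)
    (p d : Fin N → Fin N → (Fin N → ℝ) → ℝ)
    (hp0 : ∀ m ν y, 0 ≤ p m ν y) (hd0 : ∀ m ν y, 0 ≤ d m ν y)
    (hpC : ∀ m ν, ContDiff ℝ 2 (p m ν)) (hdC : ∀ m ν, ContDiff ℝ 2 (d m ν))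
    (hpL : ∀ m ν, ∃ K, LipschitzWith K (p m ν))
    (hdL : ∀ m ν, ∃ K, LipschitzWith K (d m ν))
    (hcons : ∀ m ν, p m ν = d ν m)
    (hdiagp : ∀ m, p m m = 0) (hdiagd : ∀ m, d m m = 0)
    (a : Fin s → Fin s → ℝ) (b c : Fin s → ℝ)
    (hexp : ∀ i j : Fin s, i ≤ j → a i j = 0)
    (ha : ∀ i j, 0 ≤ a i j) (hb : ∀ j, 0 ≤ b j)
    (hc : ∀ i, c i = ∑ j, a i j)
    (yn : Fin N → ℝ) (hyn : ∀ m, 0 < yn m)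
    (F : (Fin N → ℝ) → (Fin N → ℝ))
    (hF : ∀ y m, F y m = ∑ ν, (p m ν y - d m ν y))
    (ρ : ℝ → Fin s → Fin N → ℝ) (Y : ℝ → Fin s → Fin N → ℝ)
    (hstage : ∃ h₀ > (0 : ℝ), ∀ h ∈ Set.Ioc (0 : ℝ) h₀,
      (∀ (i : Fin s) ν, (i : ℕ) ≠ 0 → 0 < ρ h i ν) ∧
      (∀ i m, 0 < Y h i m) ∧
      (∀ i m, Y h i m = yn m +
        h * ∑ j ∈ Finset.univ.filter (fun j => j < i), a i j *
          ∑ ν, (p m ν (Y h j) * Y h i ν / ρ h i ν - d m ν (Y h j) * Y h i m / ρ h i m)))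
    (hratio : ∀ i : Fin s, (i : ℕ) ≠ 0 → ∀ ν,
      (fun h => Y h i ν / ρ h i ν - 1) =O[𝓝[>] (0 : ℝ)] fun h => h) :
    ∀ i ν, (fun h => Y h i ν - (yn ν + h * c i * F yn ν))
      =O[𝓝[>] (0 : ℝ)] fun h => h ^ 2 :=
  stmt10_general N s p d hpL hdL a c hexp hc yn F hF ρ Y hstage hratio
end

section
/- Consider an absolutely conservative production–destruction system on ℝ^N whose functions p_{mν}, d_{mν} are nonnegative, three times continuously differentiable and Lipschitz continuous, an explicit s-stage Runge–Kutta scheme with nonnegative a_{ij}, b_j and nodes c_i = Σ_j a_{ij}, and a state y^n ∈ ℝ^N with positive entries. Suppose that for every h in some interval (0,h₀] there are positive denominators ρ_{iν}(h) and stage vectors y^{(i)}(h) with positive entries satisfying the MPRK stage equations, and that y^{(i)}_ν(h)/ρ_{iν}(h) = 1 + O(h²) as h → 0⁺ for all i = 2,…,s and ν = 1,…,N. Then y^{(i)}_ν(h) = y^n_ν + h c_i F_ν(y^n) + h² (Σ_{k} a_{ik} c_k) (DF(y^n) F(y^n))_ν + O(h³) as h → 0⁺, for all i and ν, where F_m(y)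 = Σ_ν (p_{mν}(y) − d_{mν}(y)) and DF denotes the Jacobian of F. (This is Lemma 5.7 of the paper with the corrected coefficient Σ_k a_{ik} c_k in the h²-term, consistent with the Taylor expansion of the stages.) -/
/-!
Induction on the stage index. Because `y⁽ⁱ⁾_ν / ρ_{iν} = 1 + O(h²)` and the production and
destruction terms stay bounded, the Patankar-weighted right-hand side of stage `i` fed by stage
`j < i` equals `F_m(y⁽ʲ⁾) + O(h²)`. The induction hypothesis gives
`y⁽ʲ⁾ = yⁿ + h c_j F(yⁿ) + O(h²)`, so a second-order Taylor expansion of `F` at `yⁿ` turns this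
into `F_m(yⁿ) + h c_j (DF(yⁿ) F(yⁿ))_m + O(h²)`. Multiplying by `h` and summing with the weights
`a_{ij}` yields the expansion of `y⁽ⁱ⁾` up to `O(h³)`.
-/

open Topology Asymptotics Filter Finset

section

variable {E F : Type*} [NormedAddCommGroup E] {l : Filter ℝ} {u : ℝ → E} {a v : E}

theorem tendsto_of_isBigO_sub (hl : l ≤ 𝓝 0) (hu : (fun h => u h - a) =O[l] fun h => h) :
    Tendsto u l (𝓝 a) := by
  have := hu.trans_tendsto (tendsto_id.mono_left hl)
  rwa [tendsto_sub_nhds_zero_iff] at this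

variable [NormedSpace ℝ E] [NormedAddCommGroup F] [NormedSpace ℝ F]

theorem ContDiffAt.isBigO_sub_sub_fderiv {g : E → F} (hg : ContDiffAt ℝ 2 g a) :
    (fun y => g y - g a - fderiv ℝ g a (y - a)) =O[𝓝 a] fun y => ‖y - a‖ ^ 2 := by
  have hdiff : ∀ᶠ y in 𝓝 a, DifferentiableAt ℝ g y :=
    (hg.eventually (by simp)).mono fun y hy => hy.differentiableAt (by norm_num)
  obtain ⟨C, hC0, hC⟩ := ((hg.fderiv_right (m := 1) (by norm_num)).differentiableAt
    one_ne_zero).isBigO_sub.exists_nonneg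
  obtain ⟨δ, hδ, hball⟩ := Metric.eventually_nhds_iff_ball.1 (hdiff.and hC.bound)
  refine IsBigO.of_bound C (eventually_of_mem (Metric.ball_mem_nhds a hδ) fun y hy => ?_)
  have hsub : Metric.closedBall a ‖y - a‖ ⊆ Metric.ball a δ :=
    Metric.closedBall_subset_ball (by rwa [← dist_eq_norm])
  have hbound : ∀ z ∈ Metric.closedBall a ‖y - a‖, ‖fderiv ℝ g z - fderiv ℝ g a‖ ≤ C * ‖y - a‖ :=
    fun z hz => (hball z (hsub hz)).2.trans <|
      mul_le_mul_of_nonneg_left (mem_closedBall_iff_norm.1 hz) hC0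
  have hmv := (convex_closedBall a ‖y - a‖).norm_image_sub_le_of_norm_fderiv_le'
    (fun z hz => (hball z (hsub hz)).1) hbound (Metric.mem_closedBall_self (norm_nonneg _))
    (mem_closedBall_iff_norm.2 le_rfl)
  rw [norm_pow, norm_norm, pow_two, ← mul_assoc]
  exact hmv

theorem isBigO_sub_of_isBigO_sub_sub_smul (hl : l ≤ 𝓝 0)
    (hu : (fun h => u h - a - h • v) =O[l] fun h => h ^ 2) :
    (fun h => u h - a) =O[l] fun h => h := by
  have hsq : (fun h : ℝ => h ^ 2) =O[l] fun h => h := by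
    simpa using (isLittleO_pow_pow one_lt_two).isBigO.mono hl
  have hlin : (fun h : ℝ => h • v) =O[l] fun h => h :=
    IsBigO.of_bound ‖v‖ (Eventually.of_forall fun h => by rw [norm_smul, mul_comm])
  exact ((hu.trans hsq).add hlin).congr_left fun h => by abel

theorem ContDiffAt.isBigO_comp_sub_sub_smul_fderiv {g : E → F} (hl : l ≤ 𝓝 0)
    (hg : ContDiffAt ℝ 2 g a) (hu : (fun h => u h - a - h • v) =O[l] fun h => h ^ 2) :
    (fun h => g (u h) - g a - h • fderiv ℝ g a v) =O[l] fun h => h ^ 2 := by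
  have hu₁ := isBigO_sub_of_isBigO_sub_sub_smul hl hu
  have hquad : (fun h => g (u h) - g a - fderiv ℝ g a (u h - a)) =O[l] fun h => h ^ 2 :=
    (hg.isBigO_sub_sub_fderiv.comp_tendsto (tendsto_of_isBigO_sub hl hu₁)).trans
      (hu₁.norm_left.pow 2)
  have hlin : (fun h => fderiv ℝ g a (u h - a - h • v)) =O[l] fun h => h ^ 2 :=
    ((fderiv ℝ g a).isBigO_comp _ _).trans hu
  exact (hquad.add hlin).congr_left fun h => by simp only [map_sub, map_smul]; abel

end

theorem isBigO_sub_sub_smul_of_forall_isBigO {l : Filter ℝ} (hl : l ≤ 𝓝 0) {N : ℕ}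
    {u : ℝ → Fin N → ℝ} {a v w : Fin N → ℝ} {c e : ℝ}
    (hu : ∀ ν, (fun h => u h ν - (a ν + h * c * v ν + h ^ 2 * e * w ν)) =O[l] fun h => h ^ 3) :
    (fun h => u h - a - h • c • v) =O[l] fun h => h ^ 2 := by
  have hcube : (fun h : ℝ => h ^ 3) =O[l] fun h => h ^ 2 :=
    (isLittleO_pow_pow (by norm_num)).isBigO.mono hl
  refine isBigO_pi.2 fun ν => ?_
  have hsq : (fun h : ℝ => e * w ν * h ^ 2) =O[l] fun h => h ^ 2 :=
    (isBigO_refl _ _).const_mul_left _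
  refine (((hu ν).trans hcube).add hsq).congr_left fun h => ?_
  simp only [Pi.sub_apply, Pi.smul_apply, smul_eq_mul]
  ring

theorem isBigO_patankar_sum_sub_sum {α : Type*} {l : Filter α} {N : ℕ}
    {p d : Fin N → Fin N → (Fin N → ℝ) → ℝ} {m : Fin N} {y₀ : Fin N → ℝ}
    {u r : α → Fin N → ℝ} {g : α → ℝ}
    (hp : ∀ ν, ContinuousAt (p m ν) y₀) (hd : ∀ ν, ContinuousAt (d m ν) y₀)
    (hu : Tendsto u l (𝓝 y₀)) (hr : ∀ ν, (fun x => r x ν - 1) =O[l] g) :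
    (fun x => ∑ ν, (p m ν (u x) * r x ν - d m ν (u x) * r x m) -
      ∑ ν, (p m ν (u x) - d m ν (u x))) =O[l] g := by
  have hbounded (q : (Fin N → ℝ) → ℝ) (hq : ContinuousAt q y₀) (ν : Fin N) :
      (fun x => q (u x) * (r x ν - 1)) =O[l] g := by
    simpa using ((hq.tendsto.comp hu).isBigO_one ℝ).mul (hr ν)
  refine (IsBigO.fun_sum (s := univ) fun ν _ =>
    (hbounded _ (hp ν) ν).sub (hbounded _ (hd ν) m)).congr_left fun x => ?_
  rw [← sum_sub_distrib]
  exact sum_congr rfl fun ν _ => by ring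

theorem isBigO_stage_sub_expansion {l : Filter ℝ} {s : ℕ} {a : Fin s → Fin s → ℝ}
    {c : Fin s → ℝ} {i : Fin s} (hexp : ∀ j, i ≤ j → a i j = 0) (hci : c i = ∑ j, a i j)
    {y₀ f₀ D : ℝ} {Yi : ℝ → ℝ} {T : Fin s → ℝ → ℝ}
    (hY : ∀ᶠ h in l, Yi h = y₀ + h * ∑ j ∈ univ.filter (· < i), a i j * T j h)
    (hT : ∀ j < i, (fun h => T j h - f₀ - h * c j * D) =O[l] fun h => h ^ 2) :
    (fun h => Yi h - (y₀ + h * c i * f₀ + h ^ 2 * (∑ k, a i k * c k) * D))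
      =O[l] fun h => h ^ 3 := by
  have hfilter (x : Fin s → ℝ) : ∑ j ∈ univ.filter (· < i), a i j * x j = ∑ j, a i j * x j :=
    sum_filter_of_ne fun j _ hj => not_le.1 fun hij => hj (by rw [hexp j hij, zero_mul])
  have hsmall : (fun h => h * ∑ j ∈ univ.filter (· < i), a i j * (T j h - f₀ - h * c j * D))
      =O[l] fun h => h ^ 3 :=
    ((isBigO_refl _ _).mul (IsBigO.fun_sum fun j hj =>
      (hT j (mem_filter.1 hj).2).const_mul_left _)).congr_right fun h => by ring
  have hsplit (h : ℝ) : ∑ j ∈ univ.filter (· < i), a i j * (T j h - f₀ - h * c j * D)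
      = ∑ j ∈ univ.filter (· < i), a i j * T j h - c i * f₀ - h * (∑ k, a i k * c k) * D := by
    have hci' : c i = ∑ j ∈ univ.filter (· < i), a i j := by
      simpa [hci] using (hfilter fun _ => 1).symm
    rw [hci', ← hfilter]
    simp only [mul_sum, sum_mul, ← sum_sub_distrib]
    exact sum_congr rfl fun j _ => by ring
  refine hsmall.congr' (hY.mono fun h hh => ?_) EventuallyEq.rfl
  simp only [hsplit, hh]
  ring

theorem stmt11_general (N s : ℕ)
    (p d : Fin N → Fin N → (Fin N → ℝ) → ℝ)
    (hpC : ∀ m ν, ContDiff ℝ 3 (p m ν)) (hdC : ∀ m ν, ContDiff ℝ 3 (d m ν))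
    (a : Fin s → Fin s → ℝ) (c : Fin s → ℝ)
    (hexp : ∀ i j : Fin s, i ≤ j → a i j = 0)
    (hc : ∀ i, c i = ∑ j, a i j)
    (yn : Fin N → ℝ)
    (F : (Fin N → ℝ) → (Fin N → ℝ))
    (hF : ∀ y m, F y m = ∑ ν, (p m ν y - d m ν y))
    (ρ : ℝ → Fin s → Fin N → ℝ) (Y : ℝ → Fin s → Fin N → ℝ)
    (hstage : ∃ h₀ > (0 : ℝ), ∀ h ∈ Set.Ioc (0 : ℝ) h₀,
      (∀ (i : Fin s) ν, (i : ℕ) ≠ 0 → 0 < ρ h i ν) ∧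
      (∀ i m, 0 < Y h i m) ∧
      (∀ i m, Y h i m = yn m +
        h * ∑ j ∈ Finset.univ.filter (fun j => j < i), a i j *
          ∑ ν, (p m ν (Y h j) * Y h i ν / ρ h i ν - d m ν (Y h j) * Y h i m / ρ h i m)))
    (hratio : ∀ i : Fin s, (i : ℕ) ≠ 0 → ∀ ν,
      (fun h => Y h i ν / ρ h i ν - 1) =O[𝓝[>] (0 : ℝ)] fun h => h ^ 2) :
    ∀ i ν, (fun h => Y h i ν -
        (yn ν + h * c i * F yn ν +
          h ^ 2 * (∑ k, a i k * c k) * fderiv ℝ F yn (F yn) ν))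
      =O[𝓝[>] (0 : ℝ)] fun h => h ^ 3 := by
  obtain ⟨h₀, hh₀, hS⟩ := hstage
  have hl : 𝓝[>] (0 : ℝ) ≤ 𝓝 0 := nhdsWithin_le_nhds
  have hFC : ContDiff ℝ 2 F := contDiff_pi.2 fun m => by
    simp_rw [hF]
    exact ContDiff.sum fun ν _ => ((hpC m ν).sub (hdC m ν)).of_le (by norm_num)
  intro i
  induction i using WellFoundedLT.induction with
  | ind i IH =>
  intro m
  refine isBigO_stage_sub_expansion (hexp i) (hc i)
    (eventually_of_mem (Ioc_mem_nhdsGT hh₀) fun h hh => (hS h hh).2.2 i m) fun j hji => ?_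
  have hYj := isBigO_sub_sub_smul_of_forall_isBigO hl (IH j hji)
  have hTaylor := isBigO_pi.1 (hFC.contDiffAt.isBigO_comp_sub_sub_smul_fderiv hl hYj) m
  have hPatankar := isBigO_patankar_sum_sub_sum (m := m)
    (fun ν => (hpC m ν).continuous.continuousAt) (fun ν => (hdC m ν).continuous.continuousAt)
    (tendsto_of_isBigO_sub hl (isBigO_sub_of_isBigO_sub_sub_smul hl hYj))
    (hratio i (Nat.ne_zero_of_lt hji))
  refine (hPatankar.add hTaylor).congr_left fun h => ?_
  simp only [Pi.sub_apply, Pi.smul_apply, map_smul, smul_eq_mul, hF, mul_div_assoc]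
  ring

/-- Lemma 5.7 (Izgin–Ketcheson–Meister), with the corrected h²-coefficient
Σ_k a_{ik} c_k: Taylor expansion of the MPRK stages to second order, assuming
the Patankar weights satisfy y⁽ⁱ⁾_ν/ρ_{iν} = 1 + O(h²). -/
theorem stmt11 (N s : ℕ)
    (p d : Fin N → Fin N → (Fin N → ℝ) → ℝ)
    (hp0 : ∀ m ν y, 0 ≤ p m ν y) (hd0 : ∀ m ν y, 0 ≤ d m ν y)
    (hpC : ∀ m ν, ContDiff ℝ 3 (p m ν)) (hdC : ∀ m ν, ContDiff ℝ 3 (d m ν))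
    (hpL : ∀ m ν, ∃ K, LipschitzWith K (p m ν))
    (hdL : ∀ m ν, ∃ K, LipschitzWith K (d m ν))
    (hcons : ∀ m ν, p m ν = d ν m)
    (hdiagp : ∀ m, p m m = 0) (hdiagd : ∀ m, d m m = 0)
    (a : Fin s → Fin s → ℝ) (b c : Fin s → ℝ)
    (hexp : ∀ i j : Fin s, i ≤ j → a i j = 0)
    (ha : ∀ i j, 0 ≤ a i j) (hb : ∀ j, 0 ≤ b j)
    (hc : ∀ i, c i = ∑ j, a i j)
    (yn : Fin N → ℝ) (hyn : ∀ m, 0 < yn m)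
    (F : (Fin N → ℝ) → (Fin N → ℝ))
    (hF : ∀ y m, F y m = ∑ ν, (p m ν y - d m ν y))
    (ρ : ℝ → Fin s → Fin N → ℝ) (Y : ℝ → Fin s → Fin N → ℝ)
    (hstage : ∃ h₀ > (0 : ℝ), ∀ h ∈ Set.Ioc (0 : ℝ) h₀,
      (∀ (i : Fin s) ν, (i : ℕ) ≠ 0 → 0 < ρ h i ν) ∧
      (∀ i m, 0 < Y h i m) ∧
      (∀ i m, Y h i m = yn m +
        h * ∑ j ∈ Finset.univ.filter (fun j => j < i), a i j *
          ∑ ν, (p m ν (Y h j) * Y h i ν / ρ h i ν - d m ν (Y h j) * Y h i m / ρ h i m)))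
    (hratio : ∀ i : Fin s, (i : ℕ) ≠ 0 → ∀ ν,
      (fun h => Y h i ν / ρ h i ν - 1) =O[𝓝[>] (0 : ℝ)] fun h => h ^ 2) :
    ∀ i ν, (fun h => Y h i ν -
        (yn ν + h * c i * F yn ν +
          h ^ 2 * (∑ k, a i k * c k) * fderiv ℝ F yn (F yn) ν))
      =O[𝓝[>] (0 : ℝ)] fun h => h ^ 3 :=
  stmt11_general N s p d hpC hdC a c hexp hc yn F hF ρ Y hstage hratio
end
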